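/- Let C = x_1 … x_m and D = y_1 … y_n be digraph cycles represented as pointed cycles by their orientation strings. There is a wind-1 monotone homomorphism φ : C → D with φ(c_0) = 0 if and only if D ≤* C. Moreover, if α is a selection function exhibiting D as a *-substring x_{α(1)} … x_{α(n)} of C, then there is a monotone wind-1 homomorphism of C to D in which the increasing edges are exactly the edges c_{α(i)-1} c_{α(i)} selected by α. -/

import Mathlib

open scoped Classical

namespace Recon

/-- Orientation letters for edges of a digraph cycle: `+`, `-`, `*`. -/
inductive Orient : Type
  | plus
  | minus
  | star
deriving DecidableEq

/-- A forward arc is allowed along an edge with this orientation letter. -/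
def Orient.fwd : Orient → Prop
  | Orient.plus => True
  | Orient.minus => False
  | Orient.star => True

/-- A backward arc is allowed along an edge with this orientation letter. -/
def Orient.bwd : Orient → Prop
  | Orient.plus => False
  | Orient.minus => True
  | Orient.star => True

/-- The arc relation of the reflexive digraph cycle on `ZMod m` whose orientation
string is `f`, where `f c` is the orientation of the edge from `c` to `c + 1`. -/
def cycRel {m : ℕ} (f : ZMod m → Orient) (u v : ZMod m) : Prop :=
  u = v ∨ (v = u + 1 ∧ (f u).fwd) ∨ (u = v + 1 ∧ (f v).bwd)

/-- `φ` is a digraph homomorphism. -/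
def IsHom {α β : Type*} (rG : α → α → Prop) (rH : β → β → Prop) (φ : α → β) : Prop :=
  ∀ u v, rG u v → rH (φ u) (φ v)

/-- The arc relation of the Hom-graph `Hom(G,H)`. -/
def HomArc {α β : Type*} (rG : α → α → Prop) (rH : β → β → Prop) (φ ψ : α → β) : Prop :=
  ∀ u v, rG u v → rH (φ u) (ψ v)

/-- `φψ` is an edge of the Hom-graph. -/
def HomEdge {α β : Type*} (rG : α → α → Prop) (rH : β → β → Prop) (φ ψ : α → β) : Prop :=
  HomArc rG rH φ ψ ∨ HomArc rG rH ψ φ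

/-- The contribution of the edge `c (c+1)` of `C` to the increase of `φ`:
`1` if increasing, `-1` if decreasing, `0` if stationary. -/
def edgeVal {m n : ℕ} (φ : ZMod m → ZMod n) (c : ZMod m) : ℤ :=
  if φ (c + 1) = φ c + 1 then 1 else if φ (c + 1) = φ c - 1 then -1 else 0

/-- The increase of a map between cycles: #increasing − #decreasing edges. -/
def increase {m n : ℕ} (φ : ZMod m → ZMod n) : ℤ :=
  ∑ j ∈ Finset.range m, edgeVal φ ((j : ℕ) : ZMod m)

/-- The increase of the subpath `c_a … c_{a+L}`. -/
def partialInc {m n : ℕ} (φ : ZMod m → ZMod n) (a : ZMod m) (L : ℕ) : ℤ :=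
  ∑ j ∈ Finset.range L, edgeVal φ (a + ((j : ℕ) : ZMod m))

/-- `φ` has wind `w`, i.e. its increase is `w * n`. -/
def HasWind {m n : ℕ} (φ : ZMod m → ZMod n) (w : ℤ) : Prop :=
  increase φ = w * (n : ℤ)

/-- A reflexive digraph cycle is non-contractible if it has length at least 4
or is a directed 3-cycle. -/
def NonContractible {n : ℕ} (f : ZMod n → Orient) : Prop :=
  4 ≤ n ∨ (n = 3 ∧ ((∀ i, f i = Orient.plus) ∨ (∀ i, f i = Orient.minus)))

/-- `φ` is increasing: every edge increasing or stationary, not all stationary. -/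
def IncMap {m n : ℕ} (φ : ZMod m → ZMod n) : Prop :=
  (∀ c, φ (c + 1) = φ c + 1 ∨ φ (c + 1) = φ c) ∧ ∃ c, φ (c + 1) = φ c + 1

/-- `φ` is decreasing: every edge decreasing. -/
def DecMap {m n : ℕ} (φ : ZMod m → ZMod n) : Prop :=
  ∀ c, φ (c + 1) = φ c - 1

/-- `φ` is monotone: increasing or decreasing. -/
def MonMap {m n : ℕ} (φ : ZMod m → ZMod n) : Prop :=
  IncMap φ ∨ DecMap φ

/-- `φ` is monotone in the weak sense where constant maps also count. -/
def MonOrConst {m n : ℕ} (φ : ZMod m → ZMod n) : Prop :=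
  (∀ c, φ (c + 1) = φ c + 1 ∨ φ (c + 1) = φ c) ∨ DecMap φ

/-- `Y ≤* X`: `Y` is a `*`-substring of `X`, via a strictly increasing selection
function `α` with `Y i = X (α i)` unless `Y i = *`. -/
def StarSub {p q : ℕ} (Y : Fin p → Orient) (X : Fin q → Orient) : Prop :=
  ∃ α : Fin p → Fin q, StrictMono α ∧ ∀ i, Y i = X (α i) ∨ Y i = Orient.star

/-- The orientation string of the (pointed) cycle `f`. -/
def cycStr {m : ℕ} (f : ZMod m → Orient) : Fin m → Orient :=
  fun j => f ((j : ℕ) : ZMod m)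

/-- The orientation string `σ^i(Y^k)` = `(σ^i Y)^k`: the `i`-th shift of the
`k`-fold concatenation of the string of the cycle `fY`. -/
def shiftPowStr {s : ℕ} (fY : ZMod s → Orient) (k : ℕ) (i : ZMod s) :
    Fin (k * s) → Orient :=
  fun j => fY (i + ((j : ℕ) : ZMod s))

/-- The orientation string `σ^i(Y)^k y_{i+1}` : the `i`-th shift of the `k`-fold
concatenation of the string of `fY`, extended by its own first letter. -/
def shiftPowExtStr {s : ℕ} (fY : ZMod s → Orient) (k : ℕ) (i : ZMod s) :
    Fin (k * s + 1) → Orient :=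
  fun j => fY (i + ((j : ℕ) : ZMod s))

/-- Every vertex that moves from `φ` to `ψ`, moves up. -/
def MovesUpOnly {m n : ℕ} (φ ψ : ZMod m → ZMod n) : Prop :=
  ∀ c, ψ c = φ c ∨ ψ c = φ c + 1

/-- Every vertex that moves from `φ` to `ψ`, moves down. -/
def MovesDownOnly {m n : ℕ} (φ ψ : ZMod m → ZMod n) : Prop :=
  ∀ c, ψ c = φ c ∨ ψ c = φ c - 1

/-- `φψ` is an up edge of the Hom-graph. -/
def UpEdge {m n : ℕ} (rC : ZMod m → ZMod m → Prop) (rD : ZMod n → ZMod n → Prop)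
    (φ ψ : ZMod m → ZMod n) : Prop :=
  HomEdge rC rD φ ψ ∧ MovesUpOnly φ ψ

/-- `φ` and `ψ` are joined by a path (walk) inside the induced subgraph on `S`. -/
def ConnIn {m n : ℕ} (rC : ZMod m → ZMod m → Prop) (rD : ZMod n → ZMod n → Prop)
    (S : Set (ZMod m → ZMod n)) (φ ψ : ZMod m → ZMod n) : Prop :=
  Relation.ReflTransGen (fun a b => a ∈ S ∧ b ∈ S ∧ HomEdge rC rD a b) φ ψ

/-- `ψ` is reachable from `φ` by a path of up edges inside `S`. -/
def UpReachIn {m n : ℕ} (rC : ZMod m → ZMod m → Prop) (rD : ZMod n → ZMod n → Prop)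
    (S : Set (ZMod m → ZMod n)) (φ ψ : ZMod m → ZMod n) : Prop :=
  Relation.ReflTransGen (fun a b => a ∈ S ∧ b ∈ S ∧ UpEdge rC rD a b) φ ψ

/-- One step of a path of up edges between homomorphisms. -/
def UpStep {m n : ℕ} (rC : ZMod m → ZMod m → Prop) (rD : ZMod n → ZMod n → Prop)
    (φ ψ : ZMod m → ZMod n) : Prop :=
  IsHom rC rD φ ∧ IsHom rC rD ψ ∧ UpEdge rC rD φ ψ

/-- The set of vertices on which `φ` and `φ'` differ. -/
def Neq {α β : Type*} (φ φ' : α → β) : Set α := {g | φ g ≠ φ' g}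

/-- The map `φ_T`, agreeing with `φ'` on `T` and with `φ` elsewhere. -/
noncomputable def refineMap {α β : Type*} (φ φ' : α → β) (T : Set α) : α → β :=
  fun g => if g ∈ T then φ' g else φ g

/-- The edge `φφ'` is non-refinable: no nonempty proper subset `T` of `Neq φ φ'`
yields a homomorphism `φ_T`. -/
def NonRefinable {α β : Type*} (rG : α → α → Prop) (rH : β → β → Prop)
    (φ φ' : α → β) : Prop :=
  ¬ ∃ T : Set α, T.Nonempty ∧ T ⊂ Neq φ φ' ∧ IsHom rG rH (refineMap φ φ' T)

/-- `T` is a strong component of the digraph `r`. -/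
def IsStrongComponent {α : Type*} (r : α → α → Prop) (T : Set α) : Prop :=
  T.Nonempty ∧ (∀ u ∈ T, ∀ v ∈ T, Relation.ReflTransGen r u v) ∧
    ∀ T' : Set α, T ⊆ T' → (∀ u ∈ T', ∀ v ∈ T', Relation.ReflTransGen r u v) → T' = T

/-- `T` has no arcs out to vertices not in `T`. -/
def IsTerminal {α : Type*} (r : α → α → Prop) (T : Set α) : Prop :=
  ∀ u ∈ T, ∀ v, r u v → v ∈ T

/-- `Mon_1(C,D;i)`: monotone wind-1 homomorphisms `φ` with `φ c₀ = i`. -/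
def Mon1 {m n : ℕ} (fC : ZMod m → Orient) (fD : ZMod n → Orient) (i : ZMod n) :
    Set (ZMod m → ZMod n) :=
  {φ | IsHom (cycRel fC) (cycRel fD) φ ∧ MonMap φ ∧ increase φ = (n : ℤ) ∧ φ 0 = i}

/-- A one-step up edge: an edge from `φ` obtained by moving all the vertices of a
subpath of `C` mapped to a single vertex `d` up to `d + 1`. -/
def OneStepUp {m n : ℕ} (rC : ZMod m → ZMod m → Prop) (rD : ZMod n → ZMod n → Prop)
    (φ φ' : ZMod m → ZMod n) : Prop :=
  HomEdge rC rD φ φ' ∧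
    ∃ (a : ZMod m) (k : ℕ) (d : ZMod n), k < m ∧
      (∀ j : ℕ, j ≤ k → φ (a + ((j : ℕ) : ZMod m)) = d) ∧
      ∀ c, φ' c = if ∃ j : ℕ, j ≤ k ∧ c = a + ((j : ℕ) : ZMod m) then d + 1 else φ c

/-- The number of increasing edges of `φ` among the first `j` edges of `C`. -/
def incBefore {m n : ℕ} (φ : ZMod m → ZMod n) (j : ℕ) : ℕ :=
  ((Finset.range j).filter fun t =>
    φ (((t : ℕ) : ZMod m) + 1) = φ ((t : ℕ) : ZMod m) + 1).card

/-- One cutback-pushing step: `φ'` is obtained from `φ` by replacing the values of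
`φ` on a cutback `c_a … c_{a+L}` by `φ a`. -/
def CutbackStep {m n : ℕ} (φ φ' : ZMod m → ZMod n) : Prop :=
  ∃ (a : ZMod m) (L : ℕ), L < m ∧ partialInc φ a L = 0 ∧
    (∀ j : ℕ, 0 < j → j < L → partialInc φ a j < 0) ∧
    ∀ c, φ' c = if ∃ j : ℕ, j ≤ L ∧ c = a + ((j : ℕ) : ZMod m) then φ a else φ c

/-- `Mon_1^+(C,D;i)`: wind-1 homomorphisms whose monotone push-up is in `Mon_1(C,D;i)`. -/
def Mon1Plus {m n : ℕ} (fC : ZMod m → Orient) (fD : ZMod n → Orient) (i : ZMod n) :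
    Set (ZMod m → ZMod n) :=
  {φ | IsHom (cycRel fC) (cycRel fD) φ ∧ increase φ = (n : ℤ) ∧
    ∃ ψ ∈ Mon1 fC fD i, Relation.ReflTransGen CutbackStep φ ψ}

section Construct

variable {m n : ℕ} (hm : 3 ≤ m) (hn : 3 ≤ n) (fC : ZMod m → Orient) (fD : ZMod n → Orient)
  (α : Fin n → Fin m)

/-- counting function -/
def selCount (α : Fin n → Fin m) (c : ℕ) : ℕ :=
  (Finset.univ.filter (fun i : Fin n => (α i : ℕ) < c)).card

def selPhi (α : Fin n → Fin m) : ZMod m → ZMod n :=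
  fun c => ((selCount α c.val : ℕ) : ZMod n)

lemma selCount_zero : selCount α 0 = 0 := by
  simp [selCount]

lemma selCount_top : selCount α m = n := by
  have : (Finset.univ.filter (fun i : Fin n => (α i : ℕ) < m)) = Finset.univ := by
    ext i; simp [(α i).isLt]
  simp [selCount, this]

lemma selCount_succ (hinj : Function.Injective α) (j : ℕ) :
    selCount α (j + 1) = selCount α j + (if ∃ i, (α i : ℕ) = j then 1 else 0) := by
  classical
  unfold selCount
  have hsplit : (Finset.univ.filter (fun i : Fin n => (α i : ℕ) < j + 1))
      = (Finset.univ.filter (fun i : Fin n => (α i : ℕ) < j))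
        ∪ (Finset.univ.filter (fun i : Fin n => (α i : ℕ) = j)) := by
    ext i; simp [Nat.lt_succ_iff_lt_or_eq, Nat.le_iff_lt_or_eq]
  rw [hsplit, Finset.card_union_of_disjoint]
  · congr 1
    by_cases h : ∃ i, (α i : ℕ) = j
    · obtain ⟨i, hi⟩ := h
      have : (Finset.univ.filter (fun i' : Fin n => (α i' : ℕ) = j)) = {i} := by
        ext i'; simp only [Finset.mem_filter, Finset.mem_univ, true_and, Finset.mem_singleton]
        constructor
        · intro h'; exact hinj (Fin.val_injective (h'.trans hi.symm))
        · rintro rfl; exact hi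
      rw [this, Finset.card_singleton, if_pos ⟨i, hi⟩]
    · have : (Finset.univ.filter (fun i' : Fin n => (α i' : ℕ) = j)) = ∅ := by
        ext i'; simp only [Finset.mem_filter, Finset.mem_univ, true_and, Finset.notMem_empty,
          iff_false]
        exact fun h' => h ⟨i', h'⟩
      simp [this, h]
  · rw [Finset.disjoint_left]
    intro i hi1 hi2
    simp only [Finset.mem_filter, Finset.mem_univ, true_and] at hi1 hi2
    omega

lemma selCount_at (hmono : StrictMono α) (i : Fin n) : selCount α (α i) = i := by
  unfold selCount
  have : (Finset.univ.filter (fun i' : Fin n => (α i' : ℕ) < (α i : ℕ)))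
      = Finset.Iio i := by
    ext i'
    simp only [Finset.mem_filter, Finset.mem_univ, true_and, Finset.mem_Iio]
    rw [← Fin.lt_iff_val_lt_val, hmono.lt_iff_lt]
  rw [this, Fin.card_Iio]

include hm hn in
/-- Edge dichotomy for selPhi. -/
lemma selPhi_edge (hmono : StrictMono α) (c : ZMod m) :
    (selPhi α (c + 1) = selPhi α c + 1 ∧ ∃ i, (α i : ℕ) = c.val) ∨
    (selPhi α (c + 1) = selPhi α c ∧ ¬ ∃ i, (α i : ℕ) = c.val) := by
  classical
  haveI : NeZero m := ⟨by omega⟩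
  have hj : c.val < m := ZMod.val_lt c
  have hc : c = ((c.val : ℕ) : ZMod m) := by simp [ZMod.natCast_val, ZMod.cast_id]
  have hstep := selCount_succ α hmono.injective c.val
  have h1 : c + 1 = (((c.val + 1 : ℕ)) : ZMod m) := by push_cast; rw [← hc]
  by_cases hcase : c.val + 1 < m
  · have hval : (c + 1).val = c.val + 1 := by
      rw [h1]; exact ZMod.val_cast_of_lt hcase
    by_cases h : ∃ i, (α i : ℕ) = c.val
    · left
      refine ⟨?_, h⟩
      simp only [selPhi, hval, hstep, h, if_pos]
      push_cast; ring
    · right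
      refine ⟨?_, h⟩
      simp only [selPhi, hval, hstep, h, if_neg, not_false_iff]
      simp
  · have hm1 : c.val + 1 = m := by omega
    have hval0 : c + 1 = 0 := by
      rw [h1, hm1]; exact ZMod.natCast_self m
    have htop : selCount α c.val + (if ∃ i, (α i : ℕ) = c.val then 1 else 0) = n := by
      rw [← hstep, hm1, selCount_top]
    by_cases h : ∃ i, (α i : ℕ) = c.val
    · left
      refine ⟨?_, h⟩
      rw [if_pos h] at htop
      have : selCount α c.val = n - 1 := by omega
      simp only [selPhi, hval0, ZMod.val_zero, selCount_zero, this]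
      have : ((n - 1 : ℕ) : ZMod n) + 1 = ((n : ℕ) : ZMod n) := by
        rw [show ((n-1:ℕ):ZMod n) + 1 = (((n-1)+1 : ℕ) : ZMod n) by push_cast; ring]
        congr 1; omega
      rw [this, ZMod.natCast_self]
      simp
    · right
      refine ⟨?_, h⟩
      rw [if_neg h] at htop
      have hsc : selCount α c.val = n := by omega
      simp only [selPhi, hval0, ZMod.val_zero, selCount_zero, hsc, ZMod.natCast_self]
      simp

include hm hn in
lemma construct (hmono : StrictMono α)
    (hsel : ∀ i, cycStr fD i = cycStr fC (α i) ∨ cycStr fD i = Orient.star) :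
    ∃ φ : ZMod m → ZMod n, IsHom (cycRel fC) (cycRel fD) φ ∧ MonMap φ ∧
      HasWind φ 1 ∧ φ 0 = 0 ∧
      ∀ c : ZMod m, (φ (c + 1) = φ c + 1 ↔ ∃ i : Fin n, c = ((α i : ℕ) : ZMod m)) := by
  classical
  haveI : NeZero m := ⟨by omega⟩
  haveI : NeZero n := ⟨by omega⟩
  haveI : Fact (1 < n) := ⟨by omega⟩
  have h10 : (1 : ZMod n) ≠ 0 := one_ne_zero
  set φ := selPhi α with hφ
  have hval_round : ∀ c : ZMod m, ((c.val : ℕ) : ZMod m) = c := by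
    intro c; simp [ZMod.natCast_val, ZMod.cast_id]
  have hexiff : ∀ c : ZMod m, (∃ i, (α i : ℕ) = c.val) ↔ ∃ i, c = ((α i : ℕ) : ZMod m) := by
    intro c
    constructor
    · rintro ⟨i, hi⟩; exact ⟨i, by rw [← hval_round c, hi]⟩
    · rintro ⟨i, hi⟩
      exact ⟨i, by rw [hi, ZMod.val_cast_of_lt (α i).isLt]⟩
  have hedge : ∀ c : ZMod m,
      (φ (c + 1) = φ c + 1 ∧ ∃ i, (α i : ℕ) = c.val) ∨
      (φ (c + 1) = φ c ∧ ¬ ∃ i, (α i : ℕ) = c.val) :=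
    fun c => selPhi_edge hm hn α hmono c
  have hiff : ∀ c : ZMod m, φ (c + 1) = φ c + 1 ↔ ∃ i, (α i : ℕ) = c.val := by
    intro c
    rcases hedge c with ⟨he, hex⟩ | ⟨he, hnex⟩
    · exact ⟨fun _ => hex, fun _ => he⟩
    · constructor
      · intro h'
        rw [he] at h'
        exact absurd ((left_eq_add).mp h') h10
      · intro h'; exact absurd h' hnex
  have hval_at : ∀ i : Fin n, φ (((α i : ℕ)) : ZMod m) = ((i : ℕ) : ZMod n) := by
    intro i
    show ((selCount α ((((α i : ℕ)) : ZMod m)).val : ℕ) : ZMod n) = _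
    rw [ZMod.val_cast_of_lt (α i).isLt, selCount_at α hmono]
  have hsel' : ∀ i : Fin n,
      fD (((i : ℕ)) : ZMod n) = fC (((α i : ℕ)) : ZMod m) ∨
      fD (((i : ℕ)) : ZMod n) = Orient.star := hsel
  refine ⟨φ, ?_, ?_, ?_, ?_, ?_⟩
  · -- IsHom
    rintro u v (rfl | ⟨hv, hfwd⟩ | ⟨hu, hbwd⟩)
    · exact Or.inl rfl
    · rcases hedge u with ⟨he, i, hi⟩ | ⟨he, _⟩
      · have hu' : u = (((α i : ℕ)) : ZMod m) := by rw [← hval_round u, hi]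
        have hφu : φ u = ((i : ℕ) : ZMod n) := by rw [hu']; exact hval_at i
        refine Or.inr (Or.inl ⟨by rw [hv, he], ?_⟩)
        rcases hsel' i with h | h
        · rw [hφu, h, ← hu']; exact hfwd
        · rw [hφu, h]; trivial
      · refine Or.inl ?_
        rw [hv, he]
    · rcases hedge v with ⟨he, i, hi⟩ | ⟨he, _⟩
      · have hv' : v = (((α i : ℕ)) : ZMod m) := by rw [← hval_round v, hi]
        have hφv : φ v = ((i : ℕ) : ZMod n) := by rw [hv']; exact hval_at i
        refine Or.inr (Or.inr ⟨by rw [hu, he], ?_⟩)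
        rcases hsel' i with h | h
        · rw [hφv, h, ← hv']; exact hbwd
        · rw [hφv, h]; trivial
      · refine Or.inl ?_
        rw [hu, he]
  · -- MonMap
    left
    constructor
    · intro c
      rcases hedge c with ⟨he, _⟩ | ⟨he, _⟩
      · exact Or.inl he
      · exact Or.inr he
    · refine ⟨(((α ⟨0, by omega⟩ : ℕ)) : ZMod m), ?_⟩
      rw [hiff]
      exact ⟨⟨0, by omega⟩, by rw [ZMod.val_cast_of_lt (α _).isLt]⟩
  · -- HasWind
    show increase φ = 1 * (n : ℤ)
    have hvals : ∀ j ∈ Finset.range m,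
        edgeVal φ ((j : ℕ) : ZMod m) = if ∃ i, (α i : ℕ) = j then 1 else 0 := by
      intro j hj
      rw [Finset.mem_range] at hj
      have hvj : (((j : ℕ)) : ZMod m).val = j := ZMod.val_cast_of_lt hj
      rcases hedge ((j : ℕ) : ZMod m) with ⟨he, hex⟩ | ⟨he, hnex⟩
      · rw [hvj] at hex
        rw [edgeVal, if_pos he, if_pos hex]
      · rw [hvj] at hnex
        have hA : ¬ (φ (((j : ℕ) : ZMod m) + 1) = φ ((j : ℕ) : ZMod m) + 1) := by
          rw [he]; intro h'; exact h10 ((left_eq_add).mp h')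
        have hB : ¬ (φ (((j : ℕ) : ZMod m) + 1) = φ ((j : ℕ) : ZMod m) - 1) := by
          rw [he]; intro h'
          rw [eq_sub_iff_add_eq] at h'
          exact h10 ((add_eq_left).mp h')
        rw [edgeVal, if_neg hA, if_neg hB, if_neg hnex]
    rw [increase, Finset.sum_congr rfl hvals, Finset.sum_boole]
    have himg : (Finset.range m).filter (fun j => ∃ i, (α i : ℕ) = j)
        = Finset.image (fun i : Fin n => (α i : ℕ)) Finset.univ := by
      ext j
      simp only [Finset.mem_filter, Finset.mem_range, Finset.mem_image, Finset.mem_univ, true_and]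
      constructor
      · rintro ⟨_, i, hi⟩; exact ⟨i, hi⟩
      · rintro ⟨i, hi⟩; exact ⟨hi ▸ (α i).isLt, i, hi⟩
    have hinj' : Function.Injective (fun i : Fin n => (α i : ℕ)) :=
      fun a b h => hmono.injective (Fin.val_injective h)
    rw [himg, Finset.card_image_of_injective _ hinj']
    simp
  · -- φ 0 = 0
    show ((selCount α ((0 : ZMod m)).val : ℕ) : ZMod n) = 0
    rw [ZMod.val_zero, selCount_zero]
    simp
  · intro c
    rw [hiff, hexiff]

end Construct

section Deconstruct

variable {m n : ℕ}

lemma card_step (S : Finset ℕ) (j : ℕ) :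
    (S.filter (· < j + 1)).card = (S.filter (· < j)).card + (if j ∈ S then 1 else 0) := by
  classical
  have hsplit : S.filter (· < j + 1) = S.filter (· < j) ∪ S.filter (· = j) := by
    ext x; simp only [Finset.mem_filter, Finset.mem_union]
    constructor
    · rintro ⟨hx, hlt⟩
      rcases Nat.lt_succ_iff_lt_or_eq.mp hlt with h | h
      · exact Or.inl ⟨hx, h⟩
      · exact Or.inr ⟨hx, h⟩
    · rintro (⟨hx, h⟩ | ⟨hx, h⟩)
      · exact ⟨hx, by omega⟩
      · exact ⟨hx, by omega⟩
  rw [hsplit, Finset.card_union_of_disjoint]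
  · congr 1
    by_cases hj : j ∈ S
    · have : S.filter (· = j) = {j} := by
        ext x; simp only [Finset.mem_filter, Finset.mem_singleton]
        constructor
        · rintro ⟨_, h⟩; exact h
        · rintro rfl; exact ⟨hj, rfl⟩
      rw [this, Finset.card_singleton, if_pos hj]
    · have : S.filter (· = j) = ∅ := by
        ext x; simp only [Finset.mem_filter, Finset.notMem_empty, iff_false]
        rintro ⟨hx, rfl⟩; exact hj hx
      rw [this, Finset.card_empty, if_neg hj]
  · rw [Finset.disjoint_left]
    rintro x hx1 hx2
    simp only [Finset.mem_filter] at hx1 hx2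
    omega

lemma deconstruct (hm : 3 ≤ m) (hn : 3 ≤ n) (fC : ZMod m → Orient) (fD : ZMod n → Orient)
    (φ : ZMod m → ZMod n) (hhom : IsHom (cycRel fC) (cycRel fD) φ)
    (hmon : MonMap φ) (hwind : HasWind φ 1) (h0 : φ 0 = 0) :
    StarSub (cycStr fD) (cycStr fC) := by
  classical
  haveI : NeZero m := ⟨by omega⟩
  haveI : NeZero n := ⟨by omega⟩
  haveI : Fact (1 < n) := ⟨by omega⟩
  have h10 : (1 : ZMod n) ≠ 0 := by
    intro h
    have := congrArg ZMod.val h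
    rw [ZMod.val_one n, ZMod.val_zero] at this
    omega
  have h20 : (1 : ZMod n) + 1 ≠ 0 := by
    intro h
    have h2 : ((2 : ℕ) : ZMod n) = 0 := by push_cast; rw [← h]; ring
    have := congrArg ZMod.val h2
    rw [ZMod.val_cast_of_lt (by omega : 2 < n), ZMod.val_zero] at this
    omega
  have hwind' : increase φ = (n : ℤ) := by rw [hwind]; ring
  -- φ is increasing
  have hinc : ∀ c : ZMod m, φ (c + 1) = φ c + 1 ∨ φ (c + 1) = φ c := by
    rcases hmon with ⟨h, _⟩ | hdec
    · exact h
    · exfalso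
      have hval : ∀ c : ZMod m, edgeVal φ c = -1 := by
        intro c
        have hd := hdec c
        rw [edgeVal, if_neg, if_pos hd]
        rw [hd]
        intro h'
        rw [sub_eq_iff_eq_add] at h'
        apply h20
        have : φ c + 1 + 1 = φ c + (1 + 1) := by ring
        rw [this] at h'
        exact (left_eq_add).mp h'
      have : increase φ = -(m : ℤ) := by
        rw [increase]
        rw [Finset.sum_congr rfl (fun j _ => hval _)]
        simp
      rw [hwind'] at this
      omega
  -- edgeVal is an indicator
  have hev : ∀ c : ZMod m, edgeVal φ c = if φ (c + 1) = φ c + 1 then 1 else 0 := by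
    intro c
    rcases hinc c with h | h
    · rw [edgeVal, if_pos h, if_pos h]
    · have hA : ¬ φ (c + 1) = φ c + 1 := by
        rw [h]; intro h'; exact h10 ((left_eq_add).mp h')
      have hB : ¬ φ (c + 1) = φ c - 1 := by
        rw [h]; intro h'
        rw [eq_sub_iff_add_eq] at h'
        exact h10 ((add_eq_left).mp h')
      rw [edgeVal, if_neg hA, if_neg hB, if_neg hA]
  set S : Finset ℕ :=
    (Finset.range m).filter (fun j => φ (((j : ℕ) : ZMod m) + 1) = φ ((j : ℕ) : ZMod m) + 1)
    with hS
  have hcard : S.card = n := by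
    have : increase φ = (S.card : ℤ) := by
      rw [increase, Finset.sum_congr rfl (fun j _ => hev _), Finset.sum_boole, hS]
    rw [hwind'] at this
    exact_mod_cast this.symm
  -- counting formula for φ
  have hcount : ∀ j : ℕ, j ≤ m → φ ((j : ℕ) : ZMod m) = (((S.filter (· < j)).card : ℕ) : ZMod n) := by
    intro j
    induction j with
    | zero => intro _; simpa using h0
    | succ j ih =>
      intro hjm
      have hj : j < m := by omega
      have ihj := ih (by omega)
      have hcast : ((j + 1 : ℕ) : ZMod m) = ((j : ℕ) : ZMod m) + 1 := by push_cast; ring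
      rw [hcast, card_step S j]
      by_cases hP : φ (((j : ℕ) : ZMod m) + 1) = φ ((j : ℕ) : ZMod m) + 1
      · have hjS : j ∈ S := by rw [hS]; simp only [Finset.mem_filter, Finset.mem_range]; exact ⟨hj, hP⟩
        rw [hP, ihj, if_pos hjS]
        push_cast; ring
      · have hjS : j ∉ S := by
          rw [hS]; simp only [Finset.mem_filter, Finset.mem_range]
          rintro ⟨_, h⟩; exact hP h
        rcases hinc ((j : ℕ) : ZMod m) with h | h
        · exact absurd h hP
        · rw [h, ihj, if_neg hjS]
          simp
  -- the selection function
  have e := S.orderIsoOfFin hcard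
  have hSsub : ∀ i : Fin n, (e i : ℕ) ∈ (Finset.range m).filter
      (fun j => φ (((j : ℕ) : ZMod m) + 1) = φ ((j : ℕ) : ZMod m) + 1) := fun i => (e i).2
  have hrange : ∀ i : Fin n, (e i : ℕ) < m := fun i =>
    Finset.mem_range.mp (Finset.mem_filter.mp (hSsub i)).1
  set α : Fin n → Fin m := fun i => ⟨((e i : ℕ)), hrange i⟩ with hα
  have hmono : StrictMono α := by
    intro i i' hii
    have : (e i : ℕ) < (e i' : ℕ) := by
      have := e.strictMono hii
      exact this
    exact this
  have hfilter : ∀ i : Fin n, (S.filter (· < (e i : ℕ))).card = (i : ℕ) := by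
    intro i
    have himg : S.filter (· < (e i : ℕ))
        = Finset.image (fun j : Fin n => ((e j : ℕ))) (Finset.univ.filter (· < i)) := by
      ext x
      simp only [Finset.mem_filter, Finset.mem_image, Finset.mem_univ, true_and]
      constructor
      · rintro ⟨hx, hlt⟩
        refine ⟨e.symm ⟨x, hx⟩, ?_, ?_⟩
        · have h' : e (e.symm ⟨x, hx⟩) < e i := by
            rw [e.apply_symm_apply]
            exact Subtype.coe_lt_coe.mp hlt
          exact e.lt_iff_lt.mp h'
        · rw [e.apply_symm_apply]
      · rintro ⟨j, hji, rfl⟩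
        exact ⟨(e j).2, Subtype.coe_lt_coe.mpr (e.strictMono hji)⟩
    rw [himg, Finset.card_image_of_injective _
      (fun a b h => e.injective (Subtype.val_injective h))]
    have : (Finset.univ.filter (fun j : Fin n => j < i)) = Finset.Iio i := by
      ext j; simp
    rw [this, Fin.card_Iio]
  have hmem : ∀ i : Fin n,
      φ ((((α i : ℕ)) : ZMod m) + 1) = φ (((α i : ℕ)) : ZMod m) + 1 := fun i =>
    (Finset.mem_filter.mp (hSsub i)).2
  have hφat : ∀ i : Fin n, φ (((α i : ℕ)) : ZMod m) = (((i : ℕ)) : ZMod n) := by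
    intro i
    have h1 := hcount (e i : ℕ) (le_of_lt (hrange i))
    rw [hfilter i] at h1
    exact h1
  refine ⟨α, hmono, ?_⟩
  intro i
  set c : ZMod m := (((α i : ℕ)) : ZMod m) with hc
  set d : ZMod n := (((i : ℕ)) : ZMod n) with hd
  have hφc : φ c = d := hφat i
  have hφc1 : φ (c + 1) = d + 1 := by rw [hmem i, hφc]
  have hne1 : d ≠ d + 1 := fun h => h10 ((left_eq_add).mp h)
  have hne2 : d ≠ d + 1 + 1 := by
    intro h
    apply h20
    have : d + 1 + 1 = d + (1 + 1) := by ring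
    rw [this] at h
    exact (left_eq_add).mp h
  have hgoalC : cycStr fC (α i) = fC c := rfl
  have hgoalD : cycStr fD i = fD d := rfl
  rw [hgoalC, hgoalD]
  cases hC : fC c with
  | plus =>
    have harc : cycRel fC c (c + 1) := Or.inr (Or.inl ⟨rfl, by rw [hC]; trivial⟩)
    have := hhom _ _ harc
    rw [hφc, hφc1] at this
    rcases this with h | ⟨_, hfwd⟩ | ⟨h, _⟩
    · exact absurd h hne1
    · cases hD : fD d with
      | plus => exact Or.inl rfl
      | minus => rw [hD] at hfwd; exact absurd hfwd (by simp [Orient.fwd])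
      | star => exact Or.inr rfl
    · exact absurd h hne2
  | minus =>
    have harc : cycRel fC (c + 1) c := Or.inr (Or.inr ⟨rfl, by rw [hC]; trivial⟩)
    have := hhom _ _ harc
    rw [hφc, hφc1] at this
    rcases this with h | ⟨h, _⟩ | ⟨_, hbwd⟩
    · exact absurd h.symm hne1
    · exact absurd h hne2
    · cases hD : fD d with
      | plus => rw [hD] at hbwd; exact absurd hbwd (by simp [Orient.bwd])
      | minus => exact Or.inl rfl
      | star => exact Or.inr rfl
  | star =>
    have harc1 : cycRel fC c (c + 1) := Or.inr (Or.inl ⟨rfl, by rw [hC]; trivial⟩)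
    have harc2 : cycRel fC (c + 1) c := Or.inr (Or.inr ⟨rfl, by rw [hC]; trivial⟩)
    have h1 := hhom _ _ harc1
    have h2 := hhom _ _ harc2
    rw [hφc, hφc1] at h1 h2
    have hfwd : (fD d).fwd := by
      rcases h1 with h | ⟨_, hfwd⟩ | ⟨h, _⟩
      · exact absurd h hne1
      · exact hfwd
      · exact absurd h hne2
    have hbwd : (fD d).bwd := by
      rcases h2 with h | ⟨h, _⟩ | ⟨_, hbwd⟩
      · exact absurd h.symm hne1
      · exact absurd h hne2
      · exact hbwd
    cases hD : fD d with
    | plus => rw [hD] at hbwd; exact absurd hbwd (by simp [Orient.bwd])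
    | minus => rw [hD] at hfwd; exact absurd hfwd (by simp [Orient.fwd])
    | star => exact Or.inr rfl

end Deconstruct

/-- There is a wind-1 monotone homomorphism `φ : C → D` with `φ c₀ = 0`
iff `D ≤* C`; moreover any selection function `α` exhibiting `D` as a `*`-substring
of `C` yields a monotone wind-1 homomorphism whose increasing edges are exactly the
edges selected by `α`. -/
theorem monotone_wind_one_iff_star_substring (m n : ℕ) (hm : 3 ≤ m) (hn : 3 ≤ n)
    (hnm : n ≤ m) (fC : ZMod m → Orient) (fD : ZMod n → Orient) :
    ((∃ φ : ZMod m → ZMod n, IsHom (cycRel fC) (cycRel fD) φ ∧ MonMap φ ∧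
        HasWind φ 1 ∧ φ 0 = 0) ↔ StarSub (cycStr fD) (cycStr fC)) ∧
    (∀ α : Fin n → Fin m, StrictMono α →
      (∀ i, cycStr fD i = cycStr fC (α i) ∨ cycStr fD i = Orient.star) →
      ∃ φ : ZMod m → ZMod n, IsHom (cycRel fC) (cycRel fD) φ ∧ MonMap φ ∧
        HasWind φ 1 ∧ φ 0 = 0 ∧
        ∀ c : ZMod m, (φ (c + 1) = φ c + 1 ↔ ∃ i : Fin n, c = ((α i : ℕ) : ZMod m))) := by
  constructor
  · constructor
    · rintro ⟨φ, h1, h2, h3, h4⟩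
      exact deconstruct hm hn fC fD φ h1 h2 h3 h4
    · rintro ⟨α, hmono, hsel⟩
      obtain ⟨φ, h1, h2, h3, h4, _⟩ := construct hm hn fC fD α hmono hsel
      exact ⟨φ, h1, h2, h3, h4⟩
  · intro α hmono hsel
    exact construct hm hn fC fD α hmono hsel

end Recon
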